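/- For fixed y in [0,1) and r in (0,1], the function μ ↦ M_B(μ − r(μ − y), μ) is non-increasing with respect to μ on the interval (y, 1). -/

import Mathlib

/-!
On `(y, 1)` the first argument `z = (1 - r) μ + r y` of `M_B` satisfies `(1 - r) μ ≤ z ≤ μ`.
Writing `M_B(z, θ) = H(z) + z log θ + (1 - z) log (1 - θ)` with `H` the binary entropy, the
derivative of `μ ↦ M_B(z, μ)` is `c (log (μ / z) + log ((1 - z) / (1 - μ))) - (μ - z) / (μ (1 - μ))`
with `c = 1 - r`; `log x ≤ x - 1` and `c μ ≤ z` bound the first term by the second.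
When `r = 1` and `y = 0` we have `z ≡ 0` and the map is `μ ↦ log (1 - μ)`.
-/

noncomputable def MB (z θ : ℝ) : ℝ :=
  z * Real.log (θ / z) + (1 - z) * Real.log ((1 - θ) / (1 - z))

open Real Set

lemma mul_log_div (z : ℝ) {θ : ℝ} (hθ : θ ≠ 0) : z * log (θ / z) = z * log θ + z * log z⁻¹ := by
  rcases eq_or_ne z 0 with rfl | hz
  · simp
  · rw [div_eq_mul_inv, log_mul hθ (inv_ne_zero hz), mul_add]

lemma MB_eq_binEntropy_add (z : ℝ) {θ : ℝ} (hθ₀ : 0 < θ) (hθ₁ : θ < 1) :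
    MB z θ = binEntropy z + z * log θ + (1 - z) * log (1 - θ) := by
  rw [MB, binEntropy, mul_log_div z hθ₀.ne', mul_log_div (1 - z) (sub_pos.2 hθ₁).ne']
  ring

lemma log_sub_log_le_div {a b : ℝ} (ha : 0 < a) (hb : 0 < b) : log a - log b ≤ (a - b) / b := by
  have := log_le_sub_one_of_pos (div_pos ha hb)
  rwa [log_div ha.ne' hb.ne', div_sub_one hb.ne'] at this

theorem hasDerivAt_MB_comp {z : ℝ → ℝ} {c μ : ℝ} (hz : HasDerivAt z c μ)
    (hz₀ : 0 < z μ) (hz₁ : z μ < 1) (hμ₀ : 0 < μ) (hμ₁ : μ < 1) :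
    HasDerivAt (fun t => MB (z t) t)
      (c * (log (1 - z μ) - log (z μ) + log μ - log (1 - μ))
        + z μ / μ - (1 - z μ) / (1 - μ)) μ := by
  have hB : HasDerivAt (fun t => binEntropy (z t)) ((log (1 - z μ) - log (z μ)) * c) μ :=
    (hasDerivAt_binEntropy hz₀.ne' hz₁.ne).comp μ hz
  have hL : HasDerivAt (fun t => z t * log t) (c * log μ + z μ * μ⁻¹) μ :=
    hz.mul (hasDerivAt_log hμ₀.ne')
  have hL' : HasDerivAt (fun t => (1 - z t) * log (1 - t))
      (-c * log (1 - μ) + (1 - z μ) * (-1 / (1 - μ))) μ :=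
    (hz.const_sub 1).mul (((hasDerivAt_id μ).const_sub 1).log (sub_pos.2 hμ₁).ne')
  have hEq : (fun t => MB (z t) t) =ᶠ[nhds μ]
      fun t => binEntropy (z t) + z t * log t + (1 - z t) * log (1 - t) :=
    Filter.eventually_of_mem (Ioo_mem_nhds hμ₀ hμ₁) fun t ht => MB_eq_binEntropy_add (z t) ht.1 ht.2
  refine (((hB.add hL).add hL').congr_of_eventuallyEq hEq).congr_deriv ?_
  ring

lemma MB_shift_deriv_nonpos {c z μ : ℝ} (hc₀ : 0 ≤ c) (hc₁ : c ≤ 1) (hz₀ : 0 < z) (hzμ : z ≤ μ)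
    (hμ₁ : μ < 1) (hcz : c * μ ≤ z) :
    c * (log (1 - z) - log z + log μ - log (1 - μ)) + z / μ - (1 - z) / (1 - μ) ≤ 0 := by
  have hμ₀ : 0 < μ := hz₀.trans_le hzμ
  have hμ₁' : 0 < 1 - μ := sub_pos.2 hμ₁
  have hlog₀ : log μ - log z ≤ (μ - z) / z := log_sub_log_le_div hμ₀ hz₀
  have hlog₁ : log (1 - z) - log (1 - μ) ≤ (μ - z) / (1 - μ) := by
    simpa using log_sub_log_le_div (by linarith : 0 < 1 - z) hμ₁'
  have hδ : 0 ≤ μ - z := sub_nonneg.2 hzμ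
  have hcz' : c * ((μ - z) / z) ≤ (μ - z) / μ := by
    rw [mul_div_assoc', div_le_div_iff₀ hz₀ hμ₀]
    nlinarith [mul_le_mul_of_nonneg_left hcz hδ]
  have hc' : c * ((μ - z) / (1 - μ)) ≤ (μ - z) / (1 - μ) :=
    mul_le_of_le_one_left (div_nonneg hδ hμ₁'.le) hc₁
  calc c * (log (1 - z) - log z + log μ - log (1 - μ)) + z / μ - (1 - z) / (1 - μ)
      = c * (log μ - log z) + c * (log (1 - z) - log (1 - μ))
        - ((μ - z) / μ + (μ - z) / (1 - μ)) := by field_simp; ring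
    _ ≤ c * ((μ - z) / z) + c * ((μ - z) / (1 - μ)) - ((μ - z) / μ + (μ - z) / (1 - μ)) := by
        gcongr
    _ ≤ 0 := by linarith

theorem mb_shift_antitone (y r : ℝ) (hy0 : 0 ≤ y)
    (hr0 : 0 < r) (hr1 : r ≤ 1) :
    AntitoneOn (fun μ : ℝ => MB (μ - r * (μ - y)) μ) (Set.Ioo y 1) := by
  by_cases hdeg : r = 1 ∧ y = 0
  · obtain ⟨rfl, rfl⟩ := hdeg
    intro a _ b hb hab
    simpa [MB] using log_le_log (sub_pos.2 hb.2) (sub_le_sub_left hab 1)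
  have hderiv : ∀ μ ∈ Ioo y 1, DifferentiableAt ℝ (fun μ => MB (μ - r * (μ - y)) μ) μ ∧
      deriv (fun μ => MB (μ - r * (μ - y)) μ) μ ≤ 0 := by
    rintro μ ⟨hyμ, hμ₁⟩
    have hz₀ : 0 < μ - r * (μ - y) := by
      rcases hr1.lt_or_eq with hr | rfl
      · nlinarith
      · linarith [hy0.lt_of_ne fun h => hdeg ⟨rfl, h.symm⟩]
    have hzμ : μ - r * (μ - y) ≤ μ := by nlinarith
    have hlin : HasDerivAt (fun μ => μ - r * (μ - y)) (1 - r) μ :=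
      ((hasDerivAt_id' μ).sub (((hasDerivAt_id' μ).sub_const y).const_mul r)).congr_deriv (by ring)
    have h := hasDerivAt_MB_comp hlin hz₀ (by linarith) (hz₀.trans_le hzμ) hμ₁
    refine ⟨h.differentiableAt, h.deriv ▸ MB_shift_deriv_nonpos ?_ ?_ hz₀ hzμ hμ₁ ?_⟩ <;> nlinarith
  refine antitoneOn_of_deriv_nonpos (convex_Ioo y 1)
    (fun μ hμ => (hderiv μ hμ).1.continuousAt.continuousWithinAt) ?_ ?_ <;> rw [interior_Ioo]
  · exact fun μ hμ => (hderiv μ hμ).1.differentiableWithinAt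
  · exact fun μ hμ => (hderiv μ hμ).2
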